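/- arXiv:2112.04670 — 2 statements merged into one kernel-verified Lean document; each statement's English description precedes it below -/
import Mathlib

section
/- For every ordinal β < α, the set X^{β+1} ∖ closure(conv(⋃_{0≤γ≤β} X^γ)) is nonempty, where the closure is the norm closure in Z*; in particular there is a vector of X^{β+1} separated from conv(⋃_{0≤γ≤β} X^γ) by a norm-continuous linear functional on Z*. -/
/-!
Every countable `F_α` has a vertex `q` whose children survive to `(F_α)^β` while nothing above `q`
survives to `(F_α)^{β+1}`. This follows by induction along the construction: adjoining a new root
below countably many forests of rank at most `δ` changes nothing up to stage `δ`, and at stage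
`δ + 1` deletes the infinitely many old roots at once.

Pick a maximal `v ≥ q`. The shortened vector `y = z*(v) ∈ X^{β+1}` is supported exactly on the
chain `D` below `q`, whereas every vector of `X^γ`, `γ ≤ β`, is supported on a chain `T ≠ D`. Let
`Φ ∈ Z**` be a weak* cluster point of the bounded partial sums `∑_{i<N} z_i`, so `Φ z*_m = 1`.
Since all coefficients are at least `1`, the functional `∑_{u ∈ D} z_u - Φ/2` takes the value
`S/2` at `y`, where `S` is the sum of the coefficients on `D`, and at most `(S - 1)/2` on `X^γ`.
-/

open Set Filter Topology

noncomputable section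

namespace Paper

/-- `y` is an up-neighbor of `x` within the subforest `S`: both belong to `S`, `x < y`,
and no vertex of `S` lies strictly between them. -/
def UpNbrIn {P : Type*} [PartialOrder P] (S : Set P) (x y : P) : Prop :=
  x ∈ S ∧ y ∈ S ∧ x < y ∧ ∀ z ∈ S, ¬(x < z ∧ z < y)

/-- `x` is a terminal vertex of the subforest `S`: it has no up-neighbors within `S`. -/
def TerminalIn {P : Type*} [PartialOrder P] (S : Set P) (x : P) : Prop :=
  x ∈ S ∧ ∀ y, ¬UpNbrIn S x y

/-- One step of the derived forest operation: delete every terminal vertex whose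
down-neighbor has infinitely many terminal up-neighbors. -/
def derStep {P : Type*} [PartialOrder P] (S : Set P) : Set P :=
  S \ {x | TerminalIn S x ∧ ∃ u, UpNbrIn S u x ∧ {y | UpNbrIn S u y ∧ TerminalIn S y}.Infinite}

/-- Transfinite iteration of the derived forest operation: `derIter S β = S^{(β)}`,
with intersections at limit stages. -/
def derIter {P : Type*} [PartialOrder P] (S : Set P) (β : Ordinal) : Set P :=
  Ordinal.limitRecOn β S (fun _ T => derStep T)
    (fun β _ ih => ⋂ (γ : Ordinal), ⋂ (h : γ < β), ih γ h)

/-- Weak* closure of a set in the dual of a real normed space. -/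
def wcl {Z : Type*} [NormedAddCommGroup Z] [NormedSpace ℝ Z]
    (A : Set (StrongDual ℝ Z)) : Set (StrongDual ℝ Z) :=
  StrongDual.toWeakDual ⁻¹' closure (StrongDual.toWeakDual '' A)

/-- The weak* derived set `A^{(1)} = ⋃ₙ weak*-closure (A ∩ n B_{Z*})`. -/
def derSet {Z : Type*} [NormedAddCommGroup Z] [NormedSpace ℝ Z]
    (A : Set (StrongDual ℝ Z)) : Set (StrongDual ℝ Z) :=
  ⋃ n : ℕ, wcl (A ∩ {f | ‖f‖ ≤ (n : ℝ)})

/-- Transfinite weak* derived sets: `A^{(0)} = A`, `A^{(β+1)} = (A^{(β)})^{(1)}`, and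
`A^{(β)} = ⋃_{γ<β} A^{(γ)}` at limit stages. -/
def derSetIter {Z : Type*} [NormedAddCommGroup Z] [NormedSpace ℝ Z]
    (A : Set (StrongDual ℝ Z)) (α : Ordinal) : Set (StrongDual ℝ Z) :=
  Ordinal.limitRecOn α A (fun _ T => derSet T)
    (fun α _ ih => ⋃ (β : Ordinal), ⋃ (h : β < α), ih β h)

/-- The coefficient attached to a vertex `u` of the forest: the label of its down-neighbor,
or the label of `u` itself when `u` is an initial vertex (`n₀ = n₁`). -/
def coefN {P : Type*} [PartialOrder P] (e : P → ℕ) (u : P) : ℕ :=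
  letI := Classical.dec (∃ w, w ⋖ u)
  if h : ∃ w, w ⋖ u then e h.choose else e u

/-- The vector `z*(v)` shortened to the subforest `S`:
`∑_{u ≤ v, u ∈ S} n_{i-1} z*_{n_i}`. -/
def shortVec {P : Type*} [PartialOrder P] {Z : Type*} [NormedAddCommGroup Z] [NormedSpace ℝ Z]
    (e : P → ℕ) (zs : ℕ → StrongDual ℝ Z) (S : Set P) (v : P) : StrongDual ℝ Z :=
  ∑ᶠ u ∈ ({w | w ≤ v} ∩ S), (coefN e u : ℝ) • zs (e u)

/-- The shortening `X^β` of the set `X_α` to the subforest `S` (for `S = (F_α)^β`);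
for `S = univ` this is `X_α` itself. -/
def XsetOf {P : Type*} [PartialOrder P] {Z : Type*} [NormedAddCommGroup Z] [NormedSpace ℝ Z]
    (e : P → ℕ) (zs : ℕ → StrongDual ℝ Z) (S : Set P) : Set (StrongDual ℝ Z) :=
  {x | ∃ v : P, (¬∃ y, v ⋖ y) ∧ x = shortVec e zs S v}

/-- The largest index in the support of a vector of `X^β` (read off by evaluating
against the basic sequence); it is the label of the vertex `v(x)`. -/
def topIdx {Z : Type*} [NormedAddCommGroup Z] [NormedSpace ℝ Z]
    (z : ℕ → Z) (x : StrongDual ℝ Z) : ℕ :=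
  sSup {n | x (z n) ≠ 0}

/-- The vector `y(x)`: `x` with the coordinate at its top vertex `v(x)` replaced by `0`. -/
def truncTop {Z : Type*} [NormedAddCommGroup Z] [NormedSpace ℝ Z]
    (z : ℕ → Z) (zs : ℕ → StrongDual ℝ Z) (x : StrongDual ℝ Z) :
    StrongDual ℝ Z :=
  x - x (z (topIdx z x)) • zs (topIdx z x)

open scoped Cardinal

section DerivedForest

variable {P : Type*} [PartialOrder P]

theorem derIter_zero (S : Set P) : derIter S 0 = S :=
  Ordinal.limitRecOn_zero ..

theorem derIter_add_one (S : Set P) (γ : Ordinal) :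
    derIter S (γ + 1) = derStep (derIter S γ) :=
  Ordinal.limitRecOn_add_one ..

theorem derIter_of_isSuccLimit (S : Set P) {γ : Ordinal} (hγ : Order.IsSuccLimit γ) :
    derIter S γ = ⋂ δ < γ, derIter S δ :=
  Ordinal.limitRecOn_limit _ _ _ _ hγ

theorem derIter_anti (S : Set P) : Antitone (derIter S) := by
  intro ρ σ hρσ
  induction σ using Ordinal.limitRecOn with
  | zero => rw [nonpos_iff_eq_zero.mp hρσ]
  | add_one σ ih =>
    rcases hρσ.lt_or_eq with hlt | rfl
    · rw [derIter_add_one]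
      exact sdiff_subset.trans (ih (Order.lt_add_one_iff.mp hlt))
    · rfl
  | limit σ hσ _ =>
    rcases hρσ.lt_or_eq with hlt | rfl
    · rw [derIter_of_isSuccLimit S hσ]
      exact biInter_subset_of_mem hlt
    · rfl

theorem mem_derIter_of_isMin {S : Set P} {x : P} (hx : IsMin x) (hxS : x ∈ S) (ρ : Ordinal) :
    x ∈ derIter S ρ := by
  induction ρ using Ordinal.limitRecOn with
  | zero => rwa [derIter_zero]
  | add_one ρ ih =>
    rw [derIter_add_one]
    exact ⟨ih, fun ⟨_, _, hu, _⟩ => hx.not_lt hu.2.2.1⟩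
  | limit ρ hρ ih =>
    rw [derIter_of_isSuccLimit S hρ]
    exact mem_iInter₂.mpr ih

section FiniteLowerSets

variable (hfin : ∀ x : P, (Iic x).Finite)
include hfin

theorem exists_upNbrIn_le {T : Set P} {a b : P} (ha : a ∈ T) (hb : b ∈ T) (hab : a < b) :
    ∃ u, UpNbrIn T a u ∧ u ≤ b := by
  obtain ⟨u, hub, hu⟩ := ((hfin b).subset fun z (hz : z ∈ T ∧ a < z ∧ z ≤ b) => hz.2.2)
    |>.exists_le_minimal (show b ∈ {z | z ∈ T ∧ a < z ∧ z ≤ b} from ⟨hb, hab, le_rfl⟩)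
  refine ⟨u, ⟨ha, hu.1.1, hu.1.2.1, fun z hz ⟨haz, hzu⟩ => ?_⟩, hub⟩
  exact hzu.not_ge (hu.2 ⟨hz, haz, hzu.le.trans hu.1.2.2⟩ hzu.le)

theorem exists_covBy_le {a b : P} (hab : a < b) : ∃ u, a ⋖ u ∧ u ≤ b := by
  obtain ⟨u, ⟨-, -, hau, hu⟩, hub⟩ := exists_upNbrIn_le hfin (mem_univ a) (mem_univ b) hab
  exact ⟨u, ⟨hau, fun z haz hzu => hu z (mem_univ z) ⟨haz, hzu⟩⟩, hub⟩

theorem isMax_of_not_covBy {v : P} (hv : ¬∃ y, v ⋖ y) : IsMax v := by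
  refine isMax_iff_forall_not_lt.mpr fun y hvy => hv ?_
  obtain ⟨u, hu, -⟩ := exists_covBy_le hfin hvy
  exact ⟨u, hu⟩

theorem terminalIn_iff {T : Set P} {a : P} : TerminalIn T a ↔ a ∈ T ∧ ∀ b ∈ T, ¬a < b := by
  refine ⟨fun ⟨ha, hter⟩ => ⟨ha, fun b hb hab => ?_⟩, fun ⟨ha, hmax⟩ => ⟨ha, fun y hy => ?_⟩⟩
  · obtain ⟨u, hu, -⟩ := exists_upNbrIn_le hfin ha hb hab
    exact hter u hu
  · exact hmax y hy.2.1 hy.2.2.1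

theorem mem_derIter_univ_of_le {u x : P} (hux : u ≤ x) {ρ : Ordinal}
    (hx : x ∈ derIter univ ρ) : u ∈ derIter univ ρ := by
  induction ρ using Ordinal.limitRecOn with
  | zero => rw [derIter_zero]; trivial
  | add_one ρ ih =>
    rw [derIter_add_one] at hx ⊢
    rcases hux.lt_or_eq with hlt | rfl
    · exact ⟨ih hx.1, fun hdel => ((terminalIn_iff hfin).mp hdel.1).2 x hx.1 hlt⟩
    · exact hx
  | limit ρ hρ ih =>
    rw [derIter_of_isSuccLimit _ hρ] at hx ⊢
    exact mem_iInter₂.mpr fun δ hδ => ih δ hδ (mem_iInter₂.mp hx δ hδ)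

end FiniteLowerSets

end DerivedForest

section Transport

variable {P Q : Type*} [PartialOrder P] [PartialOrder Q] (f : P ↪o Q)

theorem upNbrIn_apply_iff (hf : IsUpperSet (range f)) {S : Set Q} {x y : P} :
    UpNbrIn S (f x) (f y) ↔ UpNbrIn (f ⁻¹' S) x y := by
  refine ⟨fun ⟨hx, hy, hxy, hbet⟩ => ⟨hx, hy, f.lt_iff_lt.mp hxy, fun z hz ⟨h₁, h₂⟩ =>
    hbet (f z) hz ⟨f.lt_iff_lt.mpr h₁, f.lt_iff_lt.mpr h₂⟩⟩,
    fun ⟨hx, hy, hxy, hbet⟩ => ⟨hx, hy, f.lt_iff_lt.mpr hxy, fun z hz ⟨h₁, h₂⟩ => ?_⟩⟩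
  obtain ⟨z, rfl⟩ := hf h₁.le ⟨x, rfl⟩
  exact hbet z hz ⟨f.lt_iff_lt.mp h₁, f.lt_iff_lt.mp h₂⟩

theorem terminalIn_apply_iff (hf : IsUpperSet (range f)) {S : Set Q} {x : P} :
    TerminalIn S (f x) ↔ TerminalIn (f ⁻¹' S) x := by
  refine ⟨fun ⟨hx, hter⟩ => ⟨hx, fun y hy => hter (f y) ((upNbrIn_apply_iff f hf).mpr hy)⟩,
    fun ⟨hx, hter⟩ => ⟨hx, fun y hy => ?_⟩⟩
  obtain ⟨y, rfl⟩ := hf hy.2.2.1.le ⟨x, rfl⟩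
  exact hter y ((upNbrIn_apply_iff f hf).mp hy)

theorem terminalUpNbrs_apply (hf : IsUpperSet (range f)) (S : Set Q) (u : P) :
    {y | UpNbrIn S (f u) y ∧ TerminalIn S y} =
      f '' {y | UpNbrIn (f ⁻¹' S) u y ∧ TerminalIn (f ⁻¹' S) y} := by
  ext y
  refine ⟨fun hy => ?_, ?_⟩
  · obtain ⟨y, rfl⟩ := hf hy.1.2.2.1.le ⟨u, rfl⟩
    exact ⟨y, ⟨(upNbrIn_apply_iff f hf).mp hy.1, (terminalIn_apply_iff f hf).mp hy.2⟩, rfl⟩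
  · rintro ⟨y, ⟨hu, hy⟩, rfl⟩
    exact ⟨(upNbrIn_apply_iff f hf).mpr hu, (terminalIn_apply_iff f hf).mpr hy⟩

theorem apply_mem_derStep_iff (hf : IsUpperSet (range f)) {S : Set Q} {x : P}
    (hout : ∀ u ∉ range f, UpNbrIn S u (f x) → {y | UpNbrIn S u y ∧ TerminalIn S y}.Finite) :
    f x ∈ derStep S ↔ x ∈ derStep (f ⁻¹' S) := by
  simp only [derStep, Set.mem_sdiff, mem_ofPred_eq, mem_preimage, terminalIn_apply_iff f hf]
  refine and_congr_right' (not_congr (and_congr_right' ⟨?_, ?_⟩))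
  · rintro ⟨u, hu, hinf⟩
    obtain ⟨u, rfl⟩ : u ∈ range f := by_contra fun h => hinf (hout u h hu)
    refine ⟨u, (upNbrIn_apply_iff f hf).mp hu, ?_⟩
    rwa [terminalUpNbrs_apply f hf, infinite_image_iff f.injective.injOn] at hinf
  · rintro ⟨u, hu, hinf⟩
    refine ⟨f u, (upNbrIn_apply_iff f hf).mpr hu, ?_⟩
    rwa [terminalUpNbrs_apply f hf, infinite_image_iff f.injective.injOn]

theorem derIter_preimage (hu : IsUpperSet (range f)) (hl : IsLowerSet (range f)) (S : Set Q)
    (ρ : Ordinal) : derIter (f ⁻¹' S) ρ = f ⁻¹' derIter S ρ := by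
  induction ρ using Ordinal.limitRecOn with
  | zero => simp only [derIter_zero]
  | add_one ρ ih =>
    ext x
    rw [derIter_add_one, derIter_add_one, ih, mem_preimage, apply_mem_derStep_iff f hu]
    exact fun u hu' hux => absurd (hl hux.2.2.1.le ⟨x, rfl⟩) hu'
  | limit ρ hρ ih =>
    ext x
    simp only [derIter_of_isSuccLimit _ hρ, mem_iInter₂, mem_preimage]
    exact forall₂_congr fun δ hδ => by rw [ih δ hδ, mem_preimage]

theorem apply_mem_derIter_univ_iff (hu : IsUpperSet (range f)) (hl : IsLowerSet (range f))
    {x : P} {ρ : Ordinal} : f x ∈ derIter univ ρ ↔ x ∈ derIter univ ρ := by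
  rw [← mem_preimage, ← derIter_preimage f hu hl, preimage_univ]

theorem OrderIso.apply_mem_derIter_univ_iff (e : P ≃o Q) {x : P} {ρ : Ordinal} :
    e x ∈ derIter univ ρ ↔ x ∈ derIter univ ρ := by
  have hrange : range e.toOrderEmbedding = univ := e.surjective.range_eq
  exact Paper.apply_mem_derIter_univ_iff e.toOrderEmbedding (hrange ▸ isUpperSet_univ)
    (hrange ▸ isLowerSet_univ)

end Transport

section Sigma

variable {ι : Type*} {W : ι → Type*} [∀ i, PartialOrder (W i)]

theorem Sigma.fst_eq_of_le {x y : Σ i, W i} (h : x ≤ y) : x.1 = y.1 :=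
  (Sigma.le_def.mp h).1

def sigmaMkOrderEmbedding (i : ι) : W i ↪o Σ i, W i :=
  OrderEmbedding.ofMapLEIff (Sigma.mk i) fun _ _ => Sigma.mk_le_mk_iff

theorem isUpperSet_range_sigmaMk (i : ι) :
    IsUpperSet (range (sigmaMkOrderEmbedding (W := W) i)) := by
  rintro x ⟨j, b⟩ hxy ⟨a, rfl⟩
  obtain rfl : i = j := Sigma.fst_eq_of_le hxy
  exact ⟨b, rfl⟩

theorem isLowerSet_range_sigmaMk (i : ι) :
    IsLowerSet (range (sigmaMkOrderEmbedding (W := W) i)) := by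
  rintro x ⟨j, b⟩ hyx ⟨a, rfl⟩
  obtain rfl : j = i := Sigma.fst_eq_of_le hyx
  exact ⟨b, rfl⟩

theorem Sigma.mk_mem_derIter_univ_iff {i : ι} {a : W i} {ρ : Ordinal} :
    (⟨i, a⟩ : Σ i, W i) ∈ derIter univ ρ ↔ a ∈ derIter univ ρ :=
  apply_mem_derIter_univ_iff (sigmaMkOrderEmbedding i) (isUpperSet_range_sigmaMk i)
    (isLowerSet_range_sigmaMk i) (x := a)

theorem Sigma.isMin_mk_iff {i : ι} {a : W i} : IsMin (⟨i, a⟩ : Σ i, W i) ↔ IsMin a := by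
  refine ⟨fun h b hb => Sigma.mk_le_mk_iff.mp (h (Sigma.mk_le_mk_iff.mpr hb)),
    fun h ⟨j, b⟩ hb => ?_⟩
  obtain rfl : j = i := Sigma.fst_eq_of_le hb
  exact Sigma.mk_le_mk_iff.mpr (h (Sigma.mk_le_mk_iff.mp hb))

theorem Sigma.isMax_mk_iff {i : ι} {a : W i} : IsMax (⟨i, a⟩ : Σ i, W i) ↔ IsMax a := by
  refine ⟨fun h b hb => Sigma.mk_le_mk_iff.mp (h (Sigma.mk_le_mk_iff.mpr hb)),
    fun h ⟨j, b⟩ hb => ?_⟩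
  obtain rfl : i = j := Sigma.fst_eq_of_le hb
  exact Sigma.mk_le_mk_iff.mpr (h (Sigma.mk_le_mk_iff.mp hb))

theorem Sigma.finite_Iic (hfin : ∀ i (a : W i), (Iic a).Finite) (x : Σ i, W i) :
    (Iic x).Finite := by
  obtain ⟨i, a⟩ := x
  refine ((hfin i a).image (Sigma.mk i)).subset ?_
  rintro ⟨j, b⟩ (hb : (⟨j, b⟩ : Σ i, W i) ≤ ⟨i, a⟩)
  obtain rfl : j = i := Sigma.fst_eq_of_le hb
  exact ⟨b, mem_Iic.mpr (Sigma.mk_le_mk_iff.mp hb), rfl⟩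

end Sigma

section WithBot

variable {P : Type*} [PartialOrder P]

theorem isUpperSet_range_coe : IsUpperSet (range (WithBot.coeOrderHom : P ↪o WithBot P)) := by
  rintro x y hxy ⟨a, rfl⟩
  induction y with
  | bot => exact absurd hxy (WithBot.not_coe_le_bot a)
  | coe b => exact ⟨b, rfl⟩

variable (hfin : ∀ x : P, (Iic x).Finite)
include hfin

theorem terminalUpNbrs_bot_subset {S : Set (WithBot P)}
    (hS : ∀ a b : P, b ≤ a → (a : WithBot P) ∈ S → (b : WithBot P) ∈ S) :
    {y | UpNbrIn S ⊥ y ∧ TerminalIn S y} ⊆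
      (↑) '' {m : P | IsMin m ∧ ∀ p : P, (p : WithBot P) ∈ S → ¬m < p} := by
  rintro y ⟨hup, hter⟩
  induction y with
  | bot => exact absurd hup.2.2.1 (lt_irrefl ⊥)
  | coe m =>
    refine ⟨m, ⟨isMin_iff_forall_not_lt.mpr fun z hz => hup.2.2.2 z (hS m z hz.le hup.2.1)
      ⟨WithBot.bot_lt_coe z, WithBot.coe_lt_coe.mpr hz⟩, fun p hp => ?_⟩, rfl⟩
    have hter' := (terminalIn_apply_iff WithBot.coeOrderHom isUpperSet_range_coe (x := m)).mp hter
    exact ((terminalIn_iff hfin).mp hter').2 p hp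

/-- The roots of `P` that are terminal at stage `σ` are the terminal children of the new root `⊥`;
as long as there are finitely many of them, `⊥` causes no deletion. -/
theorem coe_mem_derIter_withBot_iff {δ : Ordinal}
    (H : ∀ σ < δ, {m : P | IsMin m ∧ ∀ p ∈ derIter univ σ, ¬m < p}.Finite)
    {ρ : Ordinal} (hρ : ρ ≤ δ) {a : P} :
    (a : WithBot P) ∈ derIter univ ρ ↔ a ∈ derIter univ ρ := by
  induction ρ using Ordinal.limitRecOn generalizing a with
  | zero => simp only [derIter_zero, mem_univ]
  | add_one ρ ih =>
    have hρδ : ρ < δ := Order.add_one_le_iff.mp hρ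
    have ih' : ∀ a : P, (a : WithBot P) ∈ derIter univ ρ ↔ a ∈ derIter univ ρ :=
      fun a => ih hρδ.le
    have hpre : WithBot.coeOrderHom ⁻¹' derIter univ ρ = derIter (univ : Set P) ρ :=
      ext ih'
    rw [derIter_add_one, derIter_add_one, ← hpre]
    refine apply_mem_derStep_iff WithBot.coeOrderHom isUpperSet_range_coe (x := a) ?_
    intro u hu _
    obtain rfl : u = ⊥ := by
      induction u with
      | bot => rfl
      | coe c => exact absurd ⟨c, rfl⟩ hu
    refine ((H ρ hρδ).image WithBot.some).subset
      ((terminalUpNbrs_bot_subset hfin fun a b hba ha => ?_).trans ?_)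
    · exact (ih' b).mpr (mem_derIter_univ_of_le hfin hba ((ih' a).mp ha))
    · rintro _ ⟨m, ⟨hm, habove⟩, rfl⟩
      exact ⟨m, ⟨hm, fun p hp => habove p ((ih' p).mpr hp)⟩, rfl⟩
  | limit ρ hlim ih =>
    simp only [derIter_of_isSuccLimit _ hlim, mem_iInter₂]
    exact forall₂_congr fun σ hσ => ih σ hσ (hσ.le.trans hρ)

theorem derIter_withBot_add_one_subset {δ : Ordinal}
    (H : ∀ σ < δ, {m : P | IsMin m ∧ ∀ p ∈ derIter univ σ, ¬m < p}.Finite)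
    (hmin : ∀ x ∈ derIter (univ : Set P) δ, IsMin x) (hinf : {m : P | IsMin m}.Infinite) :
    derIter (univ : Set (WithBot P)) (δ + 1) ⊆ {⊥} := by
  set S := derIter (univ : Set (WithBot P)) δ
  have hS : ∀ a : P, (a : WithBot P) ∈ S ↔ a ∈ derIter univ δ :=
    fun a => coe_mem_derIter_withBot_iff hfin H le_rfl
  have key : ∀ m : P, IsMin m → UpNbrIn S ⊥ m ∧ TerminalIn S m := by
    intro m hm
    have hmS : (m : WithBot P) ∈ S := (hS m).mpr (mem_derIter_of_isMin hm (mem_univ m) δ)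
    refine ⟨⟨mem_derIter_of_isMin isMin_bot (mem_univ _) δ, hmS, WithBot.bot_lt_coe m,
      fun z _ ⟨hz₁, hz₂⟩ => ?_⟩, ⟨hmS, fun y hy => ?_⟩⟩
    · induction z with
      | bot => exact lt_irrefl _ hz₁
      | coe c => exact hm.not_lt (WithBot.coe_lt_coe.mp hz₂)
    · induction y with
      | bot => exact not_lt_bot hy.2.2.1
      | coe p => exact (hmin p ((hS p).mp hy.2.1)).not_lt (WithBot.coe_lt_coe.mp hy.2.2.1)
  rw [derIter_add_one]
  rintro x ⟨hxS, hdel⟩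
  induction x with
  | bot => rfl
  | coe a =>
    have ha := hmin a ((hS a).mp hxS)
    refine absurd ⟨(key a ha).2, ⊥, (key a ha).1, ?_⟩ hdel
    refine (hinf.image WithBot.coe_injective.injOn).mono ?_
    rintro _ ⟨m, hm, rfl⟩
    exact key m hm

end WithBot

section Rank

structure HasRank (P : Type*) [PartialOrder P] (γ : Ordinal) : Prop where
  isMin_of_mem : ∀ x ∈ derIter (univ : Set P) γ, IsMin x
  exists_not_isMin : ∀ ρ < γ, ∃ x ∈ derIter (univ : Set P) ρ, ¬IsMin x

variable {P Q : Type*} [PartialOrder P] [PartialOrder Q]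

theorem hasRank_zero (h : ∀ x : P, IsMin x) : HasRank P 0 where
  isMin_of_mem x _ := h x
  exists_not_isMin _ hρ := absurd hρ not_lt_zero

theorem HasRank.of_orderIso {γ : Ordinal} (e : P ≃o Q) (h : HasRank Q γ) : HasRank P γ where
  isMin_of_mem x hx :=
    e.isMin_apply.mp (h.isMin_of_mem _ ((OrderIso.apply_mem_derIter_univ_iff e).mpr hx))
  exists_not_isMin ρ hρ := by
    obtain ⟨x, hx, hxmin⟩ := h.exists_not_isMin ρ hρ
    refine ⟨e.symm x, (OrderIso.apply_mem_derIter_univ_iff e).mp ?_, ?_⟩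
    · rwa [e.apply_symm_apply]
    · rwa [← e.isMin_apply, e.apply_symm_apply]

theorem hasRank_sigma {ι : Type*} {W : ι → Type*} [∀ i, PartialOrder (W i)] (s : ι → Ordinal)
    {γ : Ordinal} (h : ∀ i, HasRank (W i) (s i)) (hs : ∀ i, s i ≤ γ)
    (hcof : ∀ ρ < γ, ∃ i, ρ < s i) : HasRank (Σ i, W i) γ where
  isMin_of_mem := by
    rintro ⟨i, a⟩ ha
    exact Sigma.isMin_mk_iff.mpr ((h i).isMin_of_mem a
      (derIter_anti _ (hs i) (Sigma.mk_mem_derIter_univ_iff.mp ha)))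
  exists_not_isMin ρ hρ := by
    obtain ⟨i, hi⟩ := hcof ρ hρ
    obtain ⟨x, hx, hxmin⟩ := (h i).exists_not_isMin ρ hi
    exact ⟨⟨i, x⟩, Sigma.mk_mem_derIter_univ_iff.mpr hx, Sigma.isMin_mk_iff.not.mpr hxmin⟩

structure PrunedAbove (P : Type*) [PartialOrder P] (β : Ordinal) (q : P) : Prop where
  not_isMax : ¬IsMax q
  covBy_mem : ∀ u, q ⋖ u → u ∈ derIter (univ : Set P) β
  not_mem_of_lt : ∀ w, q < w → w ∉ derIter (univ : Set P) (β + 1)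

theorem PrunedAbove.map {β : Ordinal} {q : P} (hq : PrunedAbove P β q) (f : P ↪o Q)
    (hf : IsUpperSet (range f)) (h₀ : ∀ x, x ∈ derIter univ β → f x ∈ derIter univ β)
    (h₁ : ∀ x, f x ∈ derIter univ (β + 1) → x ∈ derIter univ (β + 1)) :
    PrunedAbove Q β (f q) where
  not_isMax hmax := hq.not_isMax fun x hx => f.le_iff_le.mp (hmax (f.monotone hx))
  covBy_mem u hu := by
    obtain ⟨u, rfl⟩ := hf hu.1.le ⟨q, rfl⟩
    exact h₀ u (hq.covBy_mem u (hu.of_image f))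
  not_mem_of_lt w hw hmem := by
    obtain ⟨w, rfl⟩ := hf hw.le ⟨q, rfl⟩
    exact hq.not_mem_of_lt w (f.lt_iff_lt.mp hw) (h₁ w hmem)

theorem PrunedAbove.orderIso {β : Ordinal} {q : P} (hq : PrunedAbove P β q) (e : P ≃o Q) :
    PrunedAbove Q β (e q) :=
  hq.map e.toOrderEmbedding (e.surjective.range_eq ▸ isUpperSet_univ)
    (fun _ => (OrderIso.apply_mem_derIter_univ_iff e).mpr)
    (fun _ => (OrderIso.apply_mem_derIter_univ_iff e).mp)

theorem PrunedAbove.sigmaMk {ι : Type*} {W : ι → Type*} [∀ i, PartialOrder (W i)] {β : Ordinal}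
    {i : ι} {q : W i} (hq : PrunedAbove (W i) β q) : PrunedAbove (Σ i, W i) β ⟨i, q⟩ :=
  hq.map (sigmaMkOrderEmbedding i) (isUpperSet_range_sigmaMk i)
    (fun _ => Sigma.mk_mem_derIter_univ_iff.mpr) (fun _ => Sigma.mk_mem_derIter_univ_iff.mp)

variable (hfin : ∀ x : P, (Iic x).Finite)
include hfin

theorem PrunedAbove.mem_derIter_add_one {β : Ordinal} {q : P} (hq : PrunedAbove P β q) :
    q ∈ derIter univ (β + 1) := by
  obtain ⟨x, hx⟩ := not_isMax_iff.mp hq.not_isMax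
  obtain ⟨u, hu, -⟩ := exists_covBy_le hfin hx
  have huβ := hq.covBy_mem u hu
  have hqβ := mem_derIter_univ_of_le hfin hu.le huβ
  rw [derIter_add_one]
  exact ⟨hqβ, fun hdel => hdel.1.2 u ⟨hqβ, huβ, hu.1, fun z _ h => hu.2 h.1 h.2⟩⟩

theorem PrunedAbove.chain_eq {β : Ordinal} {q v : P} (hq : PrunedAbove P β q)
    (hlin : ∀ y w : P, y ≤ v → w ≤ v → y ≤ w ∨ w ≤ y) (hqv : q ≤ v) :
    Iic v ∩ derIter univ (β + 1) = Iic q := by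
  ext t
  refine ⟨fun ⟨htv, ht⟩ => ?_, fun htq => ⟨le_trans htq hqv,
    mem_derIter_univ_of_le hfin htq (hq.mem_derIter_add_one hfin)⟩⟩
  rcases hlin t q htv hqv with htq | hqt
  · exact htq
  · rcases hqt.lt_or_eq with hqt | rfl
    · exact absurd ht (hq.not_mem_of_lt t hqt)
    · exact le_rfl

/-- Along a maximal chain, the `γ`-th derived forest either misses `q` or contains a child of
`q`. -/
theorem PrunedAbove.chain_ne {β γ : Ordinal} {q v : P} (hq : PrunedAbove P β q) (hγ : γ ≤ β)
    (hv : IsMax v) : Iic v ∩ derIter univ γ ≠ Iic q := by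
  intro h
  have hqv : q ≤ v := (h.symm ▸ (mem_Iic.mpr le_rfl : q ∈ Iic q)).1
  obtain ⟨u, hu, huv⟩ := exists_covBy_le hfin
    (hqv.lt_of_ne fun hqv => hq.not_isMax (hqv ▸ hv))
  have hu' : u ∈ Iic q := h ▸ ⟨huv, derIter_anti _ hγ (hq.covBy_mem u hu)⟩
  exact hu.1.not_ge hu'

end Rank

section RootedSum

variable {W : ℕ → Type*} [∀ n, PartialOrder (W n)] (hfin : ∀ n (a : W n), (Iic a).Finite)
  {b : ∀ n, W n} (hb : ∀ n, IsBot (b n)) {s : ℕ → Ordinal} (hrank : ∀ n, HasRank (W n) (s n))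
  {δ : Ordinal} (hlate : ∀ σ < δ, ∀ᶠ n in atTop, σ < s n)

include hb hrank hlate in
theorem Sigma.finite_isMin_not_lt :
    ∀ σ < δ, {m : Σ n, W n | IsMin m ∧ ∀ p ∈ derIter univ σ, ¬m < p}.Finite := by
  intro σ hσ
  have hcof : ∀ᶠ n in cofinite, ∃ x ∈ derIter (univ : Set (W n)) σ, ¬IsMin x := by
    rw [Nat.cofinite_eq_atTop]
    exact (hlate σ hσ).mono fun n hn => (hrank n).exists_not_isMin σ hn
  refine ((eventually_cofinite.mp hcof).image fun n => (⟨n, b n⟩ : Σ n, W n)).subset ?_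
  rintro ⟨n, a⟩ ⟨hmin, habove⟩
  obtain rfl : a = b n := le_antisymm (Sigma.isMin_mk_iff.mp hmin (hb n a)) (hb n a)
  refine ⟨n, fun ⟨x, hx, hxmin⟩ => habove ⟨n, x⟩ (Sigma.mk_mem_derIter_univ_iff.mpr hx)
    (Sigma.mk_lt_mk_iff.mpr ((hb n x).lt_of_ne ?_)), rfl⟩
  rintro rfl
  exact hxmin (hb n).isMin

include hfin hb hrank hlate

theorem coe_mem_derIter_withBot_sigma_iff {ρ : Ordinal} (hρ : ρ ≤ δ) {a : Σ n, W n} :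
    (a : WithBot (Σ n, W n)) ∈ derIter univ ρ ↔ a ∈ derIter univ ρ :=
  coe_mem_derIter_withBot_iff (Sigma.finite_Iic hfin) (Sigma.finite_isMin_not_lt hb hrank hlate) hρ

theorem derIter_withBot_sigma_add_one_subset (hsδ : ∀ n, s n ≤ δ) :
    derIter (univ : Set (WithBot (Σ n, W n))) (δ + 1) ⊆ {⊥} :=
  derIter_withBot_add_one_subset (Sigma.finite_Iic hfin) (Sigma.finite_isMin_not_lt hb hrank hlate)
    (hasRank_sigma s hrank hsδ fun ρ hρ => (hlate ρ hρ).exists).isMin_of_mem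
    (infinite_of_injective_forall_mem (f := fun n => (⟨n, b n⟩ : Σ n, W n))
      (fun _ _ h => congrArg Sigma.fst h) fun n => Sigma.isMin_mk_iff.mpr (hb n).isMin)

theorem hasRank_withBot_sigma (hsδ : ∀ n, s n ≤ δ) : HasRank (WithBot (Σ n, W n)) (δ + 1) where
  isMin_of_mem x hx := by
    obtain rfl := derIter_withBot_sigma_add_one_subset hfin hb hrank hlate hsδ hx
    exact isMin_bot
  exists_not_isMin ρ hρ := by
    have hroot : IsMin (⟨0, b 0⟩ : Σ n, W n) := Sigma.isMin_mk_iff.mpr (hb 0).isMin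
    refine ⟨(⟨0, b 0⟩ : Σ n, W n), ?_, not_isMin_of_lt (WithBot.bot_lt_coe _)⟩
    exact (coe_mem_derIter_withBot_sigma_iff hfin hb hrank hlate (Order.lt_add_one_iff.mp hρ)).mpr
      (mem_derIter_of_isMin hroot (mem_univ _) ρ)

theorem prunedAbove_bot (hsδ : ∀ n, s n ≤ δ) : PrunedAbove (WithBot (Σ n, W n)) δ ⊥ where
  not_isMax := not_isMax_of_lt (WithBot.bot_lt_coe (⟨0, b 0⟩ : Σ n, W n))
  covBy_mem u hu := by
    induction u with
    | bot => exact absurd hu.1 (lt_irrefl ⊥)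
    | coe m =>
      exact (coe_mem_derIter_withBot_sigma_iff hfin hb hrank hlate le_rfl).mpr
        (mem_derIter_of_isMin (WithBot.bot_covBy_coe.mp hu) (mem_univ m) δ)
  not_mem_of_lt w hw hmem :=
    hw.ne' (derIter_withBot_sigma_add_one_subset hfin hb hrank hlate hsδ hmem)

end RootedSum

section MaximalElements

variable {P Q : Type*} [PartialOrder P] [PartialOrder Q]

theorem WithBot.exists_le_isMax (h : ∀ x : P, ∃ m, x ≤ m ∧ IsMax m) (x : WithBot P) :
    ∃ m, x ≤ m ∧ IsMax m := by
  induction x with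
  | coe a =>
    obtain ⟨m, ham, hm⟩ := h a
    exact ⟨m, WithBot.coe_le_coe.mpr ham, hm.withBot⟩
  | bot =>
    rcases isEmpty_or_nonempty P with hP | ⟨⟨a⟩⟩
    · refine ⟨⊥, le_rfl, fun y _ => ?_⟩
      induction y with
      | bot => exact le_rfl
      | coe a => exact isEmptyElim a
    · obtain ⟨m, -, hm⟩ := h a
      exact ⟨m, bot_le, hm.withBot⟩

theorem Sigma.exists_le_isMax {ι : Type*} {W : ι → Type*} [∀ i, PartialOrder (W i)]
    (h : ∀ i (x : W i), ∃ m, x ≤ m ∧ IsMax m) (x : Σ i, W i) : ∃ m, x ≤ m ∧ IsMax m := by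
  obtain ⟨i, a⟩ := x
  obtain ⟨m, ham, hm⟩ := h i a
  exact ⟨⟨i, m⟩, Sigma.mk_le_mk_iff.mpr ham, Sigma.isMax_mk_iff.mpr hm⟩

theorem OrderIso.exists_le_isMax (e : P ≃o Q) (h : ∀ y : Q, ∃ m, y ≤ m ∧ IsMax m) (x : P) :
    ∃ m, x ≤ m ∧ IsMax m := by
  obtain ⟨m, hm, hmax⟩ := h (e x)
  exact ⟨e.symm m, e.le_symm_apply.mpr hm, e.symm.isMax_apply.mpr hmax⟩

end MaximalElements

theorem Ordinal.eq_zero_or_eq_add_one_or_isSuccLimit (o : Ordinal) :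
    o = 0 ∨ (∃ a, o = a + 1) ∨ Order.IsSuccLimit o := by
  rcases Ordinal.zero_or_succ_or_isSuccLimit o with h | ⟨a, rfl⟩ | h
  exacts [.inl h, .inr (.inl ⟨a, Order.succ_eq_add_one a⟩), .inr (.inr h)]

/-- The defining properties of the forests `V γ = F_γ` for countable `γ`. -/
structure IsForestFamily (V : Ordinal → Type) [∀ γ, PartialOrder (V γ)]
    (seq : Ordinal → ℕ → Ordinal) : Prop where
  subsingleton_zero : ∀ x y : V 0, x = y
  nonempty_zero : Nonempty (V 0)
  finite_Iic : ∀ γ : Ordinal, γ.card ≤ ℵ₀ → ∀ x : V γ, (Iic x).Finite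
  seq_strictMono : ∀ γ : Ordinal, γ.card ≤ ℵ₀ → Order.IsSuccLimit γ → StrictMono (seq γ)
  seq_eq_add_one : ∀ γ : Ordinal, γ.card ≤ ℵ₀ → Order.IsSuccLimit γ →
    ∀ n : ℕ, ∃ δ : Ordinal, seq γ n = δ + 1
  seq_lt : ∀ γ : Ordinal, γ.card ≤ ℵ₀ → Order.IsSuccLimit γ → ∀ n : ℕ, seq γ n < γ
  exists_lt_seq : ∀ γ : Ordinal, γ.card ≤ ℵ₀ → Order.IsSuccLimit γ →
    ∀ δ : Ordinal, δ < γ → ∃ n : ℕ, δ < seq γ n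
  succ_iso : ∀ γ : Ordinal, γ.card ≤ ℵ₀ → (γ = 0 ∨ ∃ δ : Ordinal, γ = δ + 1) →
    Nonempty (V (γ + 1) ≃o WithBot (Σ _ : ℕ, V γ))
  limit_succ_iso : ∀ γ : Ordinal, γ.card ≤ ℵ₀ → Order.IsSuccLimit γ →
    Nonempty (V (γ + 1) ≃o WithBot (V γ))
  limit_iso : ∀ γ : Ordinal, γ.card ≤ ℵ₀ → Order.IsSuccLimit γ →
    Nonempty (V γ ≃o (Σ n : ℕ, V (seq γ n)))

namespace IsForestFamily

variable {V : Ordinal → Type} [∀ γ, PartialOrder (V γ)] {seq : Ordinal → ℕ → Ordinal}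
  (hV : IsForestFamily V seq)
include hV

/-- Both successor cases of the construction at once: for limit `δ`, `F_δ` is itself the sum of
the `F_{seq δ n}`. -/
theorem exists_orderIso_withBot_sigma {δ : Ordinal} (hδ : δ.card ≤ ℵ₀) :
    ∃ s : ℕ → Ordinal, (∀ n, s n ≤ δ) ∧ (∀ n, ¬Order.IsSuccLimit (s n)) ∧
      (∀ σ < δ, ∀ᶠ n in atTop, σ < s n) ∧ Nonempty (V (δ + 1) ≃o WithBot (Σ n, V (s n))) := by
  by_cases hlim : Order.IsSuccLimit δ
  · obtain ⟨e⟩ := hV.limit_succ_iso δ hδ hlim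
    obtain ⟨g⟩ := hV.limit_iso δ hδ hlim
    refine ⟨seq δ, fun n => (hV.seq_lt δ hδ hlim n).le, fun n => ?_, fun σ hσ => ?_,
      ⟨e.trans g.withBotCongr⟩⟩
    · obtain ⟨a, ha⟩ := hV.seq_eq_add_one δ hδ hlim n
      rw [ha, ← Order.succ_eq_add_one]
      exact Order.not_isSuccLimit_succ a
    · obtain ⟨n, hn⟩ := hV.exists_lt_seq δ hδ hlim σ hσ
      exact eventually_atTop.mpr
        ⟨n, fun m hm => hn.trans_le ((hV.seq_strictMono δ hδ hlim).monotone hm)⟩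
  · have hcase : δ = 0 ∨ ∃ a, δ = a + 1 :=
      (Ordinal.eq_zero_or_eq_add_one_or_isSuccLimit δ).imp_right (·.resolve_right hlim)
    obtain ⟨e⟩ := hV.succ_iso δ hδ hcase
    exact ⟨fun _ => δ, fun _ => le_rfl, fun _ => hlim, fun σ hσ => .of_forall fun _ => hσ, ⟨e⟩⟩

theorem exists_isBot {γ : Ordinal} (hγ : γ.card ≤ ℵ₀) (hlim : ¬Order.IsSuccLimit γ) :
    ∃ b : V γ, IsBot b := by
  rcases Ordinal.eq_zero_or_eq_add_one_or_isSuccLimit γ with rfl | ⟨δ, rfl⟩ | h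
  · obtain ⟨b⟩ := hV.nonempty_zero
    exact ⟨b, fun x => (hV.subsingleton_zero b x).le⟩
  · obtain ⟨_, -, -, -, ⟨e⟩⟩ :=
      hV.exists_orderIso_withBot_sigma ((Ordinal.card_le_card le_self_add).trans hγ)
    exact ⟨e.symm ⊥, fun x => e.symm_apply_le.mpr bot_le⟩
  · exact absurd h hlim

theorem exists_le_isMax {γ : Ordinal} (hγ : γ.card ≤ ℵ₀) (x : V γ) : ∃ m, x ≤ m ∧ IsMax m := by
  induction γ using WellFoundedLT.induction with
  | _ γ ih =>
  rcases Ordinal.eq_zero_or_eq_add_one_or_isSuccLimit γ with rfl | ⟨δ, rfl⟩ | hlim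
  · exact ⟨x, le_rfl, fun y _ => (hV.subsingleton_zero y x).le⟩
  · have hδ := (Ordinal.card_le_card le_self_add).trans hγ
    obtain ⟨s, hsδ, -, -, ⟨e⟩⟩ := hV.exists_orderIso_withBot_sigma hδ
    refine OrderIso.exists_le_isMax e
      (WithBot.exists_le_isMax (Sigma.exists_le_isMax fun n => ?_)) x
    have hsn := (hsδ n).trans_lt (Order.lt_add_one_iff.mpr le_rfl)
    exact ih (s n) hsn ((Ordinal.card_le_card hsn.le).trans hγ)
  · obtain ⟨e⟩ := hV.limit_iso γ hγ hlim
    refine OrderIso.exists_le_isMax e (Sigma.exists_le_isMax fun n => ?_) x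
    have hsn := hV.seq_lt γ hγ hlim n
    exact ih _ hsn ((Ordinal.card_le_card hsn.le).trans hγ)

theorem hasRank {γ : Ordinal} (hγ : γ.card ≤ ℵ₀) : HasRank (V γ) γ := by
  induction γ using WellFoundedLT.induction with
  | _ γ ih =>
  rcases Ordinal.eq_zero_or_eq_add_one_or_isSuccLimit γ with rfl | ⟨δ, rfl⟩ | hlim
  · exact hasRank_zero fun x y _ => (hV.subsingleton_zero x y).le
  · have hδ := (Ordinal.card_le_card le_self_add).trans hγ
    obtain ⟨s, hsδ, hsl, hlate, ⟨e⟩⟩ := hV.exists_orderIso_withBot_sigma hδ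
    have hsc : ∀ n, (s n).card ≤ ℵ₀ := fun n => (Ordinal.card_le_card (hsδ n)).trans hδ
    choose b hb using fun n => hV.exists_isBot (hsc n) (hsl n)
    refine (hasRank_withBot_sigma (fun n => hV.finite_Iic _ (hsc n)) hb
      (fun n => ih (s n) ((hsδ n).trans_lt (Order.lt_add_one_iff.mpr le_rfl)) (hsc n))
      hlate hsδ).of_orderIso e
  · obtain ⟨e⟩ := hV.limit_iso γ hγ hlim
    have hsn := hV.seq_lt γ hγ hlim
    exact (hasRank_sigma _ (fun n => ih _ (hsn n) ((Ordinal.card_le_card (hsn n).le).trans hγ))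
      (fun n => (hsn n).le) (hV.exists_lt_seq γ hγ hlim)).of_orderIso e

theorem exists_prunedAbove {α : Ordinal} (hα : α.card ≤ ℵ₀) {β : Ordinal} (hβ : β < α) :
    ∃ q : V α, PrunedAbove (V α) β q := by
  induction α using WellFoundedLT.induction generalizing β with
  | _ α ih =>
  rcases Ordinal.eq_zero_or_eq_add_one_or_isSuccLimit α with rfl | ⟨δ, rfl⟩ | hlim
  · exact absurd hβ not_lt_zero
  · have hδ := (Ordinal.card_le_card le_self_add).trans hα
    obtain ⟨s, hsδ, hsl, hlate, ⟨e⟩⟩ := hV.exists_orderIso_withBot_sigma hδ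
    have hsc : ∀ n, (s n).card ≤ ℵ₀ := fun n => (Ordinal.card_le_card (hsδ n)).trans hδ
    choose b hb using fun n => hV.exists_isBot (hsc n) (hsl n)
    have hfin := fun n => hV.finite_Iic _ (hsc n)
    have hrank := fun n => hV.hasRank (hsc n)
    rcases (Order.lt_add_one_iff.mp hβ).lt_or_eq with hβδ | rfl
    · obtain ⟨n, hn⟩ := (hlate β hβδ).exists
      obtain ⟨q, hq⟩ := ih (s n) ((hsδ n).trans_lt (Order.lt_add_one_iff.mpr le_rfl)) (hsc n) hn
      refine ⟨_, ((hq.sigmaMk (W := fun n => V (s n))).map WithBot.coeOrderHom isUpperSet_range_coe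
        (fun x hx => ?_) (fun x hx => ?_)).orderIso e.symm⟩
      · exact (coe_mem_derIter_withBot_sigma_iff hfin hb hrank hlate hβδ.le).mpr hx
      · exact (coe_mem_derIter_withBot_sigma_iff hfin hb hrank hlate
          (Order.add_one_le_of_lt hβδ)).mp hx
    · exact ⟨_, (prunedAbove_bot hfin hb hrank hlate hsδ).orderIso e.symm⟩
  · obtain ⟨e⟩ := hV.limit_iso α hα hlim
    obtain ⟨n, hn⟩ := hV.exists_lt_seq α hα hlim β hβ
    have hsn := hV.seq_lt α hα hlim n
    obtain ⟨q, hq⟩ := ih _ hsn ((Ordinal.card_le_card hsn.le).trans hα) hn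
    exact ⟨_, (hq.sigmaMk (W := fun n => V (seq α n))).orderIso e.symm⟩

end IsForestFamily

section Separation

theorem sum_inter_sub_half_sum_le {ι : Type*} [DecidableEq ι] {a : ι → ℝ} (ha : ∀ i, 1 ≤ a i)
    {D T : Finset ι} (hTD : T ≠ D) :
    ∑ t ∈ D ∩ T, a t - 2⁻¹ * ∑ t ∈ T, a t ≤ 2⁻¹ * ∑ t ∈ D, a t - 2⁻¹ := by
  have ha₀ : ∀ i, 0 ≤ a i := fun i => zero_le_one.trans (ha i)
  have grow : ∀ {S U : Finset ι} {i : ι}, S ⊆ U → i ∈ U → i ∉ S →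
      ∑ t ∈ S, a t + a i ≤ ∑ t ∈ U, a t := by
    intro S U i hSU hiU hiS
    rw [add_comm, ← Finset.sum_insert hiS]
    exact Finset.sum_le_sum_of_subset_of_nonneg (Finset.insert_subset hiU hSU) fun i _ _ => ha₀ i
  have hD := Finset.sum_le_sum_of_subset_of_nonneg (Finset.inter_subset_left (s₁ := D) (s₂ := T))
    fun i _ _ => ha₀ i
  have hT := Finset.sum_le_sum_of_subset_of_nonneg (Finset.inter_subset_right (s₁ := D) (s₂ := T))
    fun i _ _ => ha₀ i
  obtain ⟨i, hi⟩ : ∃ i, (i ∈ D ∧ i ∉ T) ∨ (i ∈ T ∧ i ∉ D) := by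
    by_contra! h
    exact hTD (Finset.ext fun i => ⟨(h i).2, (h i).1⟩)
  rcases hi with ⟨hiD, hiT⟩ | ⟨hiT, hiD⟩
  · linarith [ha i, grow Finset.inter_subset_left hiD fun h => hiT (Finset.mem_inter.mp h).2]
  · linarith [ha i, grow Finset.inter_subset_right hiT fun h => hiD (Finset.mem_inter.mp h).1]

theorem closure_convexHull_subset_of_le {E : Type*} [AddCommGroup E] [Module ℝ E]
    [TopologicalSpace E] (F : E →L[ℝ] ℝ) {A : Set E} {c : ℝ} (h : ∀ w ∈ A, F w ≤ c) :
    closure (convexHull ℝ A) ⊆ {x | F x ≤ c} :=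
  closure_minimal (convexHull_min h (convex_halfSpace_le F.toLinearMap.isLinear c))
    (isClosed_le F.continuous continuous_const)

variable {Z : Type*} [NormedAddCommGroup Z] [NormedSpace ℝ Z]

/-- Banach–Alaoglu: `Φ` is a weak* cluster point of the bounded sequence `s` in the bidual. -/
theorem exists_bidual_eq_of_eventually_eq (s : ℕ → Z) {C : ℝ} (hs : ∀ N, ‖s N‖ ≤ C) :
    ∃ Φ : StrongDual ℝ (StrongDual ℝ Z),
      ∀ (f : StrongDual ℝ Z) (c : ℝ), (∀ᶠ N in atTop, f (s N) = c) → Φ f = c := by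
  let U := Ultrafilter.of (atTop : Filter ℕ)
  let ι : ℕ → WeakDual ℝ (StrongDual ℝ Z) :=
    fun N => StrongDual.toWeakDual (NormedSpace.inclusionInDoubleDual ℝ Z (s N))
  obtain ⟨Φ, -, hΦ⟩ := (WeakDual.isCompact_closedBall (𝕜 := ℝ) 0 C).ultrafilter_le_nhds
    (U.map ι) (le_principal_iff.mpr (Ultrafilter.mem_map.mpr (univ_mem' fun N =>
      mem_closedBall_zero_iff.mpr ((NormedSpace.double_dual_bound ℝ Z (s N)).trans (hs N)))))
  refine ⟨WeakDual.toStrongDual Φ, fun f c hf => tendsto_nhds_unique ?_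
    (tendsto_const_nhds.congr' (Ultrafilter.of_le atTop (hf.mono fun _ h => h.symm)))⟩
  exact ((WeakDual.eval_continuous f).tendsto Φ).comp hΦ

variable (z : ℕ → Z) (zs : ℕ → StrongDual ℝ Z)
  (hbi : ∀ i j : ℕ, zs j (z i) = if i = j then (1 : ℝ) else 0)
include hbi

theorem sum_smul_biorthogonal_apply {ι : Type*} [DecidableEq ι] {e : ι → ℕ}
    (he : Function.Injective e) (T : Finset ι) (a : ι → ℝ) (u : ι) :
    (∑ t ∈ T, a t • zs (e t)) (z (e u)) = if u ∈ T then a u else 0 := by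
  simp only [sum_apply, smul_apply, hbi, he.eq_iff,
    smul_eq_mul, mul_ite, mul_one, mul_zero, Finset.sum_ite_eq]

theorem exists_separating_of_ne_support {ι : Type*} [DecidableEq ι] {e : ι → ℕ}
    (he : Function.Injective e) {C : ℝ} (hzC : ∀ k : ℕ, ‖∑ i ∈ Finset.range k, z i‖ ≤ C)
    {a : ι → ℝ} (ha : ∀ i, 1 ≤ a i) (D : Finset ι) {A : Set (StrongDual ℝ Z)}
    (hA : ∀ w ∈ A, ∃ T : Finset ι, T ≠ D ∧ w = ∑ t ∈ T, a t • zs (e t)) :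
    ∃ F : StrongDual ℝ (StrongDual ℝ Z),
      ∀ w ∈ closure (convexHull ℝ A), F w < F (∑ t ∈ D, a t • zs (e t)) := by
  obtain ⟨Φ, hΦ⟩ := exists_bidual_eq_of_eventually_eq _ hzC
  have hΦ₁ : ∀ m, Φ (zs m) = 1 := fun m => hΦ _ _ <|
    (eventually_gt_atTop m).mono fun N hN => by simp [map_sum, hbi, hN]
  let F := ∑ u ∈ D, NormedSpace.inclusionInDoubleDual ℝ Z (z (e u)) - (2⁻¹ : ℝ) • Φ
  have hF₀ : ∀ y, F y = ∑ u ∈ D, y (z (e u)) - 2⁻¹ * Φ y := fun y => by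
    simp only [F, sub_apply, smul_apply, sum_apply, NormedSpace.dual_def, smul_eq_mul]
  have hF : ∀ T : Finset ι,
      F (∑ t ∈ T, a t • zs (e t)) = ∑ t ∈ D ∩ T, a t - 2⁻¹ * ∑ t ∈ T, a t := by
    intro T
    rw [hF₀, Finset.sum_congr rfl fun u _ => sum_smul_biorthogonal_apply z zs hbi he T a u,
      Finset.sum_ite_mem, map_sum]
    simp only [map_smul, hΦ₁, smul_eq_mul, mul_one]
  refine ⟨F, fun w hw => ?_⟩
  have hle := closure_convexHull_subset_of_le F (c := 2⁻¹ * ∑ t ∈ D, a t - 2⁻¹) (by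
    intro w hw
    obtain ⟨T, hTD, rfl⟩ := hA w hw
    rw [hF]
    exact sum_inter_sub_half_sum_le ha hTD) hw
  rw [hF, Finset.inter_self]
  linarith [mem_ofPred_eq ▸ hle]

end Separation

section Vectors

variable {P : Type*} [PartialOrder P] {e : P → ℕ}

theorem one_le_coefN (he : ∀ x, e x ≠ 0) (u : P) : 1 ≤ (coefN e u : ℝ) := by
  rw [Nat.one_le_cast, Nat.one_le_iff_ne_zero]
  unfold coefN
  split <;> exact he _

theorem shortVec_eq_sum {Z : Type*} [NormedAddCommGroup Z] [NormedSpace ℝ Z]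
    (zs : ℕ → StrongDual ℝ Z) {S A : Set P} {v : P} (hA : A.Finite) (h : {w | w ≤ v} ∩ S = A) :
    shortVec e zs S v = ∑ t ∈ hA.toFinset, (coefN e t : ℝ) • zs (e t) := by
  rw [shortVec, h]
  exact finsum_mem_eq_finite_toFinset_sum _ hA

end Vectors

theorem statement12
    (V : Ordinal → Type) [∀ γ : Ordinal, PartialOrder (V γ)]
    (seq : Ordinal → ℕ → Ordinal)
    (hV0 : ∀ x y : V 0, x = y) (hV0ne : Nonempty (V 0))
    (hchainfin : ∀ γ : Ordinal, γ.card ≤ Cardinal.aleph0 → ∀ x : V γ, {y : V γ | y ≤ x}.Finite)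
    (hchainlin : ∀ γ : Ordinal, γ.card ≤ Cardinal.aleph0 →
      ∀ x y w : V γ, y ≤ x → w ≤ x → y ≤ w ∨ w ≤ y)
    (hseqmono : ∀ γ : Ordinal, γ.card ≤ Cardinal.aleph0 → Order.IsSuccLimit γ → StrictMono (seq γ))
    (hseqsucc : ∀ γ : Ordinal, γ.card ≤ Cardinal.aleph0 → Order.IsSuccLimit γ →
      ∀ n : ℕ, ∃ δ : Ordinal, seq γ n = δ + 1)
    (hseqlt : ∀ γ : Ordinal, γ.card ≤ Cardinal.aleph0 → Order.IsSuccLimit γ → ∀ n : ℕ, seq γ n < γ)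
    (hseqcof : ∀ γ : Ordinal, γ.card ≤ Cardinal.aleph0 → Order.IsSuccLimit γ →
      ∀ δ : Ordinal, δ < γ → ∃ n : ℕ, δ < seq γ n)
    (hsucc : ∀ γ : Ordinal, γ.card ≤ Cardinal.aleph0 → (γ = 0 ∨ ∃ δ : Ordinal, γ = δ + 1) →
      Nonempty (V (γ + 1) ≃o WithBot (Σ _ : ℕ, V γ)))
    (hlimsucc : ∀ γ : Ordinal, γ.card ≤ Cardinal.aleph0 → Order.IsSuccLimit γ →
      Nonempty (V (γ + 1) ≃o WithBot (V γ)))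
    (hlim : ∀ γ : Ordinal, γ.card ≤ Cardinal.aleph0 → Order.IsSuccLimit γ →
      Nonempty (V γ ≃o (Σ n : ℕ, V (seq γ n))))
    {Z : Type*} [NormedAddCommGroup Z] [NormedSpace ℝ Z] [CompleteSpace Z]
    (z : ℕ → Z) (zs : ℕ → StrongDual ℝ Z) (C K : ℝ)
    (hz1 : ∀ i : ℕ, 1 ≤ ‖z i‖)
    (hzC : ∀ k : ℕ, ‖∑ i ∈ Finset.range k, z i‖ ≤ C)
    (hbasic : ∀ m n : ℕ, m ≤ n → ∀ a : ℕ → ℝ,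
      ‖∑ i ∈ Finset.range m, a i • z i‖ ≤ K * ‖∑ i ∈ Finset.range n, a i • z i‖)
    (hspan : (Submodule.span ℝ (Set.range z)).topologicalClosure = ⊤)
    (hbi : ∀ i j : ℕ, zs j (z i) = if i = j then (1 : ℝ) else 0)
    (α : Ordinal) (hαc : α.card ≤ Cardinal.aleph0)
    (e : V α → ℕ) (heinj : Function.Injective e)
    (hemono : ∀ x y : V α, x < y → e x < e y)
    (hepos : ∀ x : V α, e x ≠ 0)
    (β : Ordinal) (hβ : β < α) :
    ∃ y ∈ XsetOf e zs (derIter (Set.univ : Set (V α)) (β + 1)),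
      y ∉ closure (convexHull ℝ (⋃ γ : Ordinal, ⋃ _ : γ ≤ β, XsetOf e zs (derIter (Set.univ : Set (V α)) γ))) ∧
      ∃ F : StrongDual ℝ (StrongDual ℝ Z),
        ∀ w ∈ convexHull ℝ (⋃ γ : Ordinal, ⋃ _ : γ ≤ β, XsetOf e zs (derIter (Set.univ : Set (V α)) γ)), F w < F y := by
  classical
  have hV : IsForestFamily V seq := ⟨hV0, hV0ne, hchainfin, hseqmono, hseqsucc, hseqlt, hseqcof,
    hsucc, hlimsucc, hlim⟩
  have hfin : ∀ x : V α, (Iic x).Finite := hchainfin α hαc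
  obtain ⟨q, hq⟩ := hV.exists_prunedAbove hαc hβ
  obtain ⟨v, hqv, hv⟩ := hV.exists_le_isMax hαc q
  obtain ⟨F, hF⟩ := exists_separating_of_ne_support z zs hbi heinj hzC (one_le_coefN hepos)
    (hfin q).toFinset (A := ⋃ γ : Ordinal, ⋃ _ : γ ≤ β, XsetOf e zs (derIter univ γ)) (by
      simp only [mem_iUnion]
      rintro _ ⟨γ, hγ, v', hv', rfl⟩
      have hS := (hfin v').subset (inter_subset_left (t := derIter univ γ))
      refine ⟨hS.toFinset, fun h => ?_, shortVec_eq_sum zs hS rfl⟩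
      exact hq.chain_ne hfin hγ (isMax_of_not_covBy hfin hv') (by simpa using h))
  refine ⟨_, ⟨v, fun ⟨_, hy⟩ => hv.not_lt hy.1,
    (shortVec_eq_sum zs (hfin q) (hq.chain_eq hfin (hchainlin α hαc v) hqv)).symm⟩,
    fun hy => (hF _ hy).false, F, fun w hw => hF w (subset_closure hw)⟩

end Paper
end
end

section
/- If the sequence of convex combinations (Σ_{x∈W} a_{x,i} x)_{i=1}^∞ is bounded in norm in Z*, then Σ_{x∈I} p_x + Σ_{y∈D} s_y = 1. -/
/-!
Every vector of `W` is a chain vector `∑_{u ∈ T} n(u) z*_{e u}` along a finite chain `T` of the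
forest, and evaluating it on the partial sums `∑_{j<k} z_j` (for `k` large) gives its weight
`∑_{u ∈ T} n(u)`. As these partial sums have norm at most `C`, a convex combination of norm at
most `M` puts mass at most `MC/N` on vectors of weight `> N` (Markov). Send `x ∈ I` to itself and
`x ∈ W \ I` to `y(x)`: a vector of weight `≤ N` lands in a finite set, because its image is a chain
vector supported below a vertex of label `≤ N`. So the pushed-forward probability vectors on
`I ⊔ D` are tight, and their pointwise limit `(p, s)` still has total mass `1`.
-/

open Set Filter Topology

noncomputable section

namespace Paper

section Tightness

variable {ι κ : Type*}

theorem hasSum_one_of_tendsto_of_tight {b : ℕ → κ → ℝ} {q : κ → ℝ}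
    (hb0 : ∀ i k, 0 ≤ b i k) (hb : ∀ i, HasSum (b i) 1)
    (hq : ∀ k, Tendsto (fun i => b i k) atTop (𝓝 (q k)))
    (htight : ∀ ε > 0, ∃ F : Finset κ, ∀ i, 1 - ε ≤ ∑ k ∈ F, b i k) :
    HasSum q 1 := by
  have hqF (F : Finset κ) :
      Tendsto (fun i => ∑ k ∈ F, b i k) atTop (𝓝 (∑ k ∈ F, q k)) :=
    tendsto_finsetSum F fun k _ => hq k
  have hq0 : 0 ≤ q := fun k => ge_of_tendsto' (hq k) fun i => hb0 i k
  have hle : ∀ F : Finset κ, ∑ k ∈ F, q k ≤ 1 := fun F =>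
    le_of_tendsto' (hqF F) fun i => sum_le_hasSum F (fun k _ => hb0 i k) (hb i)
  have hsum : Summable q := summable_of_sum_le hq0 hle
  refine hsum.hasSum_iff.2 (le_antisymm (hsum.tsum_le_of_sum_le hle) ?_)
  refine le_of_forall_pos_le_add fun ε hε => ?_
  obtain ⟨F, hF⟩ := htight ε hε
  linarith [ge_of_tendsto' (hqF F) hF, hsum.sum_le_tsum F fun k _ => hq0 k]

theorem hasSum_finsum_mem_preimage_singleton {M : Type*} [AddCommMonoid M] [TopologicalSpace M]
    {f : ι → M} (hf : (Function.support f).Finite) (g : ι → κ) :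
    HasSum (fun k => ∑ᶠ x ∈ g ⁻¹' {k}, f x) (∑ᶠ x, f x) := by
  classical
  simp_rw [finsum_mem_eq_sum_filter f _ hf, finsum_eq_sum f hf]
  rw [← Finset.sum_fiberwise_of_maps_to fun x hx => Finset.mem_image_of_mem g hx]
  refine hasSum_sum_of_ne_finset_zero fun k hk => Finset.sum_eq_zero fun x hx => ?_
  obtain ⟨hxs, rfl⟩ := Finset.mem_filter.1 hx
  exact absurd (Finset.mem_image_of_mem g hxs) hk

theorem one_sub_div_le_sum_filter_le (s : Finset ι) {a f : ι → ℝ}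
    (ha : ∀ x ∈ s, 0 ≤ a x) (hf : ∀ x ∈ s, 0 ≤ f x) {c N : ℝ} (hN : 0 < N)
    (hs : ∑ x ∈ s, a x = 1) (hc : ∑ x ∈ s, a x * f x ≤ c) :
    1 - c / N ≤ ∑ x ∈ s with f x ≤ N, a x := by
  have hmarkov : N * ∑ x ∈ s with ¬f x ≤ N, a x ≤ c := by
    rw [Finset.mul_sum]
    calc ∑ x ∈ s with ¬f x ≤ N, N * a x
        ≤ ∑ x ∈ s with ¬f x ≤ N, a x * f x := Finset.sum_le_sum fun x hx => by
          rw [Finset.mem_filter, not_le] at hx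
          nlinarith [ha x hx.1]
      _ ≤ ∑ x ∈ s, a x * f x :=
          Finset.sum_le_sum_of_subset_of_nonneg (Finset.filter_subset _ _) fun x hx _ =>
            mul_nonneg (ha x hx) (hf x hx)
      _ ≤ c := hc
  have htail : ∑ x ∈ s with ¬f x ≤ N, a x ≤ c / N := by
    rw [le_div_iff₀ hN]
    linarith
  linarith [Finset.sum_filter_add_sum_filter_not s (fun x => f x ≤ N) a]

theorem hasSum_one_of_tendsto_of_moment_le {a : ℕ → ι → ℝ} {W : Set ι} {g : ι → κ}
    {wt : ι → ℝ} {q : κ → ℝ} {c : ℝ}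
    (ha0 : ∀ i x, 0 ≤ a i x) (hafin : ∀ i, (Function.support (a i)).Finite)
    (haW : ∀ i, Function.support (a i) ⊆ W) (hasum : ∀ i, ∑ᶠ x, a i x = 1)
    (hwt0 : ∀ x ∈ W, 0 ≤ wt x) (hmoment : ∀ i, ∑ᶠ x, a i x * wt x ≤ c)
    (hsub : ∀ N : ℕ, ∃ F : Finset κ, ∀ x ∈ W, wt x ≤ N → g x ∈ F)
    (hq : ∀ k, Tendsto (fun i => ∑ᶠ x ∈ g ⁻¹' {k}, a i x) atTop (𝓝 (q k))) :
    HasSum q 1 := by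
  classical
  refine hasSum_one_of_tendsto_of_tight
    (fun i k => finsum_nonneg fun x => finsum_nonneg fun _ => ha0 i x)
    (fun i => hasum i ▸ hasSum_finsum_mem_preimage_singleton (hafin i) g) hq fun ε hε => ?_
  set A := fun i => (hafin i).toFinset
  have hAW : ∀ i, ∀ x ∈ A i, x ∈ W := fun i x hx => haW i ((hafin i).mem_toFinset.1 hx)
  have hA1 : ∀ i, ∑ x ∈ A i, a i x = 1 := fun i =>
    (finsum_eq_sum _ (hafin i)).symm.trans (hasum i)
  have hAc : ∀ i, ∑ x ∈ A i, a i x * wt x ≤ c := fun i => by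
    rw [← finsum_eq_sum_of_support_subset _ fun x hx => (hafin i).mem_toFinset.2
      (Function.support_mul_subset_left _ _ hx)]
    exact hmoment i
  have hc : 0 ≤ c := (Finset.sum_nonneg fun x hx =>
    mul_nonneg (ha0 0 x) (hwt0 x (hAW 0 x hx))).trans (hAc 0)
  obtain ⟨N, hN⟩ := exists_nat_gt (c / ε)
  have hNpos : (0 : ℝ) < N := (div_nonneg hc hε.le).trans_lt hN
  obtain ⟨F, hF⟩ := hsub N
  refine ⟨F, fun i => ?_⟩
  calc 1 - ε ≤ 1 - c / N := by
        rw [div_lt_iff₀ hε] at hN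
        rw [sub_le_sub_iff_left, div_le_iff₀ hNpos]
        linarith
    _ ≤ ∑ x ∈ A i with wt x ≤ N, a i x := one_sub_div_le_sum_filter_le (A i)
        (fun x _ => ha0 i x) (fun x hx => hwt0 x (hAW i x hx)) hNpos (hA1 i) (hAc i)
    _ ≤ ∑ x ∈ A i with g x ∈ F, a i x := Finset.sum_le_sum_of_subset_of_nonneg
        (Finset.monotone_filter_right _ fun x hx => hF x (hAW i x hx)) fun x _ _ => ha0 i x
    _ = ∑ k ∈ F, ∑ᶠ x ∈ g ⁻¹' {k}, a i x :=
        (Finset.sum_fiberwise_eq_sum_filter _ _ _ _).symm.trans (Finset.sum_congr rfl fun k _ =>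
          (finsum_mem_eq_sum_filter (a i) _ (hafin i)).symm)

end Tightness

section Forest

variable {P : Type*} [PartialOrder P]

theorem isStronglyCoatomic_of_finite_Iic (hfin : ∀ x : P, (Iic x).Finite) :
    IsStronglyCoatomic P where
  exists_le_covBy_of_lt a b hab := by
    obtain ⟨c, ⟨hac, hcb⟩, hmax⟩ :=
      ((hfin b).subset fun y hy => hy.2.le : (Ico a b).Finite).exists_maximal ⟨a, le_rfl, hab⟩
    exact ⟨c, hac, hcb, fun d hcd hdb => hcd.not_ge (hmax ⟨hac.trans hcd.le, hdb⟩ hcd.le)⟩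

theorem eq_of_covBy_of_covBy (hlin : ∀ x : P, IsChain (· ≤ ·) (Iic x)) {a b c : P}
    (ha : a ⋖ c) (hb : b ⋖ c) : a = b := by
  by_contra hne
  rcases hlin c ha.le hb.le hne with h | h
  · exact ha.2 (h.lt_of_ne hne) hb.lt
  · exact hb.2 (h.lt_of_ne (Ne.symm hne)) ha.lt

theorem exists_forall_le_of_isChain {T : Finset P} (hT : IsChain (· ≤ ·) (T : Set P))
    (hne : T.Nonempty) : ∃ m ∈ T, ∀ u ∈ T, u ≤ m := by
  obtain ⟨m, hm, hmax⟩ := T.exists_maximal hne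
  refine ⟨m, hm, fun u hu => ?_⟩
  rcases eq_or_ne u m with rfl | hum
  · exact le_rfl
  · exact (hT hu hm hum).resolve_right fun hmu => hum (le_antisymm (hmax hu hmu) hmu)

theorem coefN_of_covBy (hlin : ∀ x : P, IsChain (· ≤ ·) (Iic x)) (e : P → ℕ) {w m : P}
    (h : w ⋖ m) : coefN e m = e w := by
  have hex : ∃ w, w ⋖ m := ⟨w, h⟩
  rw [coefN, dif_pos hex, eq_of_covBy_of_covBy hlin hex.choose_spec h]

theorem coefN_of_not_exists_covBy (e : P → ℕ) {m : P} (h : ¬∃ w, w ⋖ m) :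
    coefN e m = e m := by
  rw [coefN, dif_neg h]

theorem coefN_ne_zero {e : P → ℕ} (he0 : ∀ u, e u ≠ 0) (u : P) : coefN e u ≠ 0 := by
  unfold coefN
  split <;> exact he0 _

end Forest

section Split

variable {ι : Type*} {W I : Set ι} {t : ι → ι}

-- `I` and `D = t '' (W \ I)` may overlap, so their masses are kept apart in `ι ⊕ ι`.
open Classical in
def splitMap (I : Set ι) (t : ι → ι) (x : ι) : ι ⊕ ι :=
  if x ∈ I then .inl x else .inr (t x)

theorem finsum_mem_preimage_splitMap_inl (f : ι → ℝ) (x : ι) :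
    ∑ᶠ y ∈ splitMap I t ⁻¹' {.inl x}, f y = I.indicator f x := by
  have hpre : splitMap I t ⁻¹' {.inl x} = I ∩ {x} := by
    ext y
    by_cases hy : y ∈ I <;> simp [splitMap, hy, eq_comm]
  by_cases hx : x ∈ I <;> simp [hpre, hx]

theorem finsum_mem_preimage_splitMap_inr {f : ι → ℝ} (hf : Function.support f ⊆ W) (y : ι) :
    ∑ᶠ x ∈ splitMap I t ⁻¹' {.inr y}, f x =
      ∑ᶠ x ∈ {x | x ∈ W \ I ∧ t x = y}, f x := by
  refine finsum_mem_inter_support_eq _ _ _ ?_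
  ext x
  by_cases hx : x ∈ I <;> simp [splitMap, hx]
  exact fun hfx _ => hf hfx

theorem tendsto_finsum_mem_preimage_splitMap {a : ℕ → ι → ℝ} {p s : ι → ℝ}
    (hIW : I ⊆ W) (haW : ∀ i, Function.support (a i) ⊆ W)
    (hp : ∀ x ∈ W, Tendsto (fun i => a i x) atTop (𝓝 (p x)))
    (hs : ∀ y ∈ t '' (W \ I),
      Tendsto (fun i => ∑ᶠ x ∈ {x | x ∈ W \ I ∧ t x = y}, a i x) atTop (𝓝 (s y)))
    (k : ι ⊕ ι) :
    Tendsto (fun i => ∑ᶠ x ∈ splitMap I t ⁻¹' {k}, a i x) atTop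
      (𝓝 (Sum.elim (I.indicator p) ((t '' (W \ I)).indicator s) k)) := by
  rcases k with x | y
  · simp only [finsum_mem_preimage_splitMap_inl, Sum.elim_inl]
    by_cases hx : x ∈ I
    · simpa [hx] using hp x (hIW hx)
    · simp [hx]
  · simp only [finsum_mem_preimage_splitMap_inr (haW _), Sum.elim_inr]
    by_cases hy : y ∈ t '' (W \ I)
    · simpa [hy] using hs y hy
    · have hempty : {x | x ∈ W \ I ∧ t x = y} = ∅ :=
        eq_empty_of_forall_notMem fun x hx => hy ⟨x, hx.1, hx.2⟩
      simp_rw [Set.indicator_of_notMem hy, hempty, finsum_mem_empty]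
      exact tendsto_const_nhds

end Split

section Moment

variable {Z : Type*} [NormedAddCommGroup Z] [NormedSpace ℝ Z] {z : ℕ → Z}

def coordSum (z : ℕ → Z) (x : StrongDual ℝ Z) : ℝ :=
  ∑ᶠ n, x (z n)

theorem apply_sum_range_eq_coordSum {x : StrongDual ℝ Z} {k : ℕ}
    (hk : (Function.support fun n => x (z n)) ⊆ ↑(Finset.range k)) :
    x (∑ j ∈ Finset.range k, z j) = coordSum z x := by
  rw [map_sum, coordSum, finsum_eq_sum_of_support_subset _ hk]

theorem finsum_mul_coordSum_le {C : ℝ} (hzC : ∀ k, ‖∑ j ∈ Finset.range k, z j‖ ≤ C)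
    {c : StrongDual ℝ Z → ℝ} (hc : (Function.support c).Finite)
    (hcoord : ∀ x ∈ Function.support c, (Function.support fun n => x (z n)).Finite) :
    ∑ᶠ x, c x * coordSum z x ≤ ‖∑ᶠ x, c x • x‖ * C := by
  obtain ⟨k, hk⟩ := (hc.biUnion hcoord).bddAbove
  set Sk := ∑ j ∈ Finset.range (k + 1), z j
  have hSk : ∀ x ∈ Function.support c, x Sk = coordSum z x := fun x hx =>
    apply_sum_range_eq_coordSum fun n hn =>
      Finset.mem_range.2 (Nat.lt_succ_of_le (hk (mem_biUnion hx hn)))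
  calc ∑ᶠ x, c x * coordSum z x = ∑ x ∈ hc.toFinset, c x * x Sk := by
        rw [finsum_eq_sum_of_support_subset _ fun x hx =>
          hc.mem_toFinset.2 (Function.support_mul_subset_left _ _ hx)]
        exact Finset.sum_congr rfl fun x hx => by rw [hSk x (hc.mem_toFinset.1 hx)]
    _ = (∑ᶠ x, c x • x) Sk := by
        rw [finsum_eq_sum_of_support_subset (fun x => c x • x) fun x hx =>
          hc.mem_toFinset.2 (Function.support_smul_subset_left c id hx), sum_apply]
        simp only [smul_apply, smul_eq_mul]
    _ ≤ ‖∑ᶠ x, c x • x‖ * ‖Sk‖ :=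
        (Real.le_norm_self _).trans (ContinuousLinearMap.le_opNorm _ _)
    _ ≤ ‖∑ᶠ x, c x • x‖ * C := mul_le_mul_of_nonneg_left (hzC _) (norm_nonneg _)

end Moment

section ChainVec

variable {P : Type*} [PartialOrder P] {Z : Type*} [NormedAddCommGroup Z] [NormedSpace ℝ Z]
  {z : ℕ → Z} {zs : ℕ → StrongDual ℝ Z} {e : P → ℕ}

def Biorthogonal (z : ℕ → Z) (zs : ℕ → StrongDual ℝ Z) : Prop :=
  ∀ i j, zs j (z i) = if i = j then 1 else 0

def chainVec (e : P → ℕ) (zs : ℕ → StrongDual ℝ Z) (T : Finset P) : StrongDual ℝ Z :=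
  ∑ u ∈ T, (coefN e u : ℝ) • zs (e u)

theorem shortVec_eq_chainVec (hfin : ∀ x : P, (Iic x).Finite) (S : Set P) (v : P) :
    ∃ T : Finset P, ↑T ⊆ Iic v ∧ shortVec e zs S v = chainVec e zs T :=
  ⟨((hfin v).inter_of_left S).toFinset, by simp, finsum_mem_eq_finite_toFinset_sum _ _⟩

theorem chainVec_apply_of_mem (hbi : Biorthogonal z zs)
    (he : Function.Injective e) {T : Finset P} {u : P} (hu : u ∈ T) :
    chainVec e zs T (z (e u)) = coefN e u := by
  rw [chainVec, _root_.sum_apply, Finset.sum_eq_single_of_mem u hu]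
  · simp [hbi (e u) (e u)]
  · intro w _ hwu
    simp [hbi (e u) (e w), he.ne hwu.symm]

theorem chainVec_apply_eq_zero (hbi : Biorthogonal z zs)
    {T : Finset P} {n : ℕ} (hn : ∀ u ∈ T, e u ≠ n) : chainVec e zs T (z n) = 0 := by
  rw [chainVec, _root_.sum_apply]
  exact Finset.sum_eq_zero fun u hu => by simp [hbi n (e u), (hn u hu).symm]

theorem support_chainVec_apply (hbi : Biorthogonal z zs)
    (he : Function.Injective e) (he0 : ∀ u, e u ≠ 0) (T : Finset P) :
    (Function.support fun n => chainVec e zs T (z n)) = ↑(T.image e) := by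
  ext n
  simp only [Function.mem_support, Finset.coe_image, mem_image, Finset.mem_coe]
  constructor
  · intro h
    by_contra! h'
    exact h (chainVec_apply_eq_zero hbi h')
  · rintro ⟨u, hu, rfl⟩
    rw [chainVec_apply_of_mem hbi he hu]
    exact_mod_cast coefN_ne_zero he0 u

theorem coordSum_chainVec (hbi : Biorthogonal z zs)
    (he : Function.Injective e) (he0 : ∀ u, e u ≠ 0) (T : Finset P) :
    coordSum z (chainVec e zs T) = ∑ u ∈ T, (coefN e u : ℝ) := by
  classical
  rw [coordSum, finsum_eq_sum_of_support_subset _ (support_chainVec_apply hbi he he0 T).subset,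
    Finset.sum_image he.injOn]
  exact Finset.sum_congr rfl fun u hu => chainVec_apply_of_mem hbi he hu

theorem coefN_le_coordSum_chainVec (hbi : Biorthogonal z zs)
    (he : Function.Injective e) (he0 : ∀ u, e u ≠ 0) {T : Finset P} {m : P} (hm : m ∈ T) :
    (coefN e m : ℝ) ≤ coordSum z (chainVec e zs T) := by
  rw [coordSum_chainVec hbi he he0]
  exact Finset.single_le_sum (f := fun u => (coefN e u : ℝ)) (fun u _ => by positivity) hm

theorem topIdx_chainVec (hbi : Biorthogonal z zs)
    (he : Function.Injective e) (he0 : ∀ u, e u ≠ 0) (hmono : StrictMono e)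
    {T : Finset P} {m : P} (hm : m ∈ T) (hmax : ∀ u ∈ T, u ≤ m) :
    topIdx z (chainVec e zs T) = e m := by
  classical
  change sSup (Function.support fun n => chainVec e zs T (z n)) = e m
  rw [support_chainVec_apply hbi he he0]
  refine IsGreatest.csSup_eq ⟨by simpa using ⟨m, hm, rfl⟩, ?_⟩
  simp only [mem_upperBounds, Finset.coe_image, mem_image, Finset.mem_coe, forall_exists_index,
    and_imp]
  rintro _ u hu rfl
  exact hmono.monotone (hmax u hu)

theorem truncTop_chainVec [DecidableEq P] (hbi : Biorthogonal z zs)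
    (he : Function.Injective e) (he0 : ∀ u, e u ≠ 0) (hmono : StrictMono e)
    {T : Finset P} {m : P} (hm : m ∈ T) (hmax : ∀ u ∈ T, u ≤ m) :
    truncTop z zs (chainVec e zs T) = chainVec e zs (T.erase m) := by
  rw [truncTop, topIdx_chainVec hbi he he0 hmono hm hmax, chainVec_apply_of_mem hbi he hm,
    chainVec, chainVec, ← Finset.add_sum_erase T _ hm, add_sub_cancel_left]

def HasInitialTop (e : P → ℕ) (z : ℕ → Z) (x : StrongDual ℝ Z) : Prop :=
  ∃ u, e u = topIdx z x ∧ ¬∃ w, w ⋖ u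

def lowVertices (e : P → ℕ) (N : ℕ) : Set P :=
  {u | ∃ w, u ≤ w ∧ e w ≤ N}

theorem finite_lowVertices (hfin : ∀ x : P, (Iic x).Finite) (he : Function.Injective e)
    (N : ℕ) : (lowVertices e N).Finite :=
  (((finite_Iic N).preimage he.injOn).biUnion fun w _ => hfin w).subset
    fun _ ⟨w, huw, hw⟩ => mem_biUnion (show w ∈ e ⁻¹' Iic N from hw) huw

theorem exists_chainVec_of_mem_XsetOf (hfin : ∀ x : P, (Iic x).Finite)
    (hlin : ∀ x : P, IsChain (· ≤ ·) (Iic x)) {S : Set P} {x : StrongDual ℝ Z}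
    (hx : x ∈ XsetOf e zs S) :
    ∃ T : Finset P, IsChain (· ≤ ·) (T : Set P) ∧ x = chainVec e zs T := by
  obtain ⟨v, -, rfl⟩ := hx
  obtain ⟨T, hTv, hT⟩ := shortVec_eq_chainVec (e := e) (zs := zs) hfin S v
  exact ⟨T, (hlin v).mono hTv, hT⟩

theorem subset_lowVertices_of_hasInitialTop (hbi : Biorthogonal z zs)
    (he : Function.Injective e) (he0 : ∀ u, e u ≠ 0) (hmono : StrictMono e) {T : Finset P}
    (hT : IsChain (· ≤ ·) (T : Set P)) (h : HasInitialTop e z (chainVec e zs T)) {N : ℕ}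
    (hN : coordSum z (chainVec e zs T) ≤ N) : ↑T ⊆ lowVertices e N := by
  intro t ht
  obtain ⟨m, hm, hmax⟩ := exists_forall_le_of_isChain hT ⟨t, ht⟩
  obtain ⟨u, hu, hinit⟩ := h
  rw [topIdx_chainVec hbi he he0 hmono hm hmax] at hu
  obtain rfl := he hu
  have hle := coefN_le_coordSum_chainVec hbi he he0 hm (z := z)
  rw [coefN_of_not_exists_covBy e hinit] at hle
  exact ⟨u, hmax t ht, by exact_mod_cast hle.trans hN⟩

theorem exists_truncTop_chainVec_eq [IsStronglyCoatomic P]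
    (hlin : ∀ x : P, IsChain (· ≤ ·) (Iic x)) (hbi : Biorthogonal z zs)
    (he : Function.Injective e) (he0 : ∀ u, e u ≠ 0) (hmono : StrictMono e) {T : Finset P}
    (hT : IsChain (· ≤ ·) (T : Set P)) (h : ¬HasInitialTop e z (chainVec e zs T)) {N : ℕ}
    (hN : coordSum z (chainVec e zs T) ≤ N) :
    ∃ T' : Finset P, ↑T' ⊆ lowVertices e N ∧
      truncTop z zs (chainVec e zs T) = chainVec e zs T' := by
  classical
  rcases T.eq_empty_or_nonempty with rfl | hne
  · exact ⟨∅, by simp, by simp [truncTop, chainVec]⟩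
  obtain ⟨m, hm, hmax⟩ := exists_forall_le_of_isChain hT hne
  obtain ⟨w, hw⟩ : ∃ w, w ⋖ m := by
    by_contra hinit
    exact h ⟨m, (topIdx_chainVec hbi he he0 hmono hm hmax).symm, hinit⟩
  refine ⟨T.erase m, fun u hu => ?_, truncTop_chainVec hbi he he0 hmono hm hmax⟩
  obtain ⟨hum, huT⟩ := Finset.mem_erase.1 hu
  obtain ⟨w', huw', hw'⟩ := exists_le_covBy_of_lt ((hmax u huT).lt_of_ne hum)
  have hle := coefN_le_coordSum_chainVec hbi he he0 hm (z := z)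
  rw [coefN_of_covBy hlin e hw] at hle
  exact ⟨w, eq_of_covBy_of_covBy hlin hw' hw ▸ huw', by exact_mod_cast hle.trans hN⟩

theorem exists_finset_splitMap_mem (hfin : ∀ x : P, (Iic x).Finite)
    (hlin : ∀ x : P, IsChain (· ≤ ·) (Iic x)) (hbi : Biorthogonal z zs)
    (he : Function.Injective e) (he0 : ∀ u, e u ≠ 0) (hmono : StrictMono e)
    {W I : Set (StrongDual ℝ Z)}
    (hW : ∀ x ∈ W, ∃ T : Finset P, IsChain (· ≤ ·) (T : Set P) ∧ x = chainVec e zs T)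
    (hI : ∀ x ∈ W, x ∈ I ↔ HasInitialTop e z x) (N : ℕ) :
    ∃ F : Finset (StrongDual ℝ Z ⊕ StrongDual ℝ Z),
      ∀ x ∈ W, coordSum z x ≤ N → splitMap I (truncTop z zs) x ∈ F := by
  classical
  have := isStronglyCoatomic_of_finite_Iic hfin
  set S := (finite_lowVertices hfin he N).toFinset.powerset.image (chainVec e zs)
  have hS : ∀ T : Finset P, ↑T ⊆ lowVertices e N → chainVec e zs T ∈ S := fun T hT =>
    Finset.mem_image_of_mem _ <| Finset.mem_powerset.2 fun u hu =>
      (Set.Finite.mem_toFinset _).2 (hT hu)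
  refine ⟨S.disjSum S, fun x hx hxN => ?_⟩
  obtain ⟨T, hT, rfl⟩ := hW x hx
  by_cases h : HasInitialTop e z (chainVec e zs T)
  · rw [splitMap, if_pos ((hI _ hx).2 h)]
    exact Finset.inl_mem_disjSum.2
      (hS T (subset_lowVertices_of_hasInitialTop hbi he he0 hmono hT h hxN))
  · obtain ⟨T', hT', heq⟩ := exists_truncTop_chainVec_eq hlin hbi he he0 hmono hT h hxN
    rw [splitMap, if_neg (mt (hI _ hx).1 h), heq]
    exact Finset.inr_mem_disjSum.2 (hS T' hT')

end ChainVec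

theorem statement16
    (V : Ordinal → Type) [∀ γ : Ordinal, PartialOrder (V γ)]
    (seq : Ordinal → ℕ → Ordinal)
    (hV0 : ∀ x y : V 0, x = y) (hV0ne : Nonempty (V 0))
    (hchainfin : ∀ γ : Ordinal, γ.card ≤ Cardinal.aleph0 → ∀ x : V γ, {y : V γ | y ≤ x}.Finite)
    (hchainlin : ∀ γ : Ordinal, γ.card ≤ Cardinal.aleph0 →
      ∀ x y w : V γ, y ≤ x → w ≤ x → y ≤ w ∨ w ≤ y)
    (hseqmono : ∀ γ : Ordinal, γ.card ≤ Cardinal.aleph0 → Order.IsSuccLimit γ → StrictMono (seq γ))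
    (hseqsucc : ∀ γ : Ordinal, γ.card ≤ Cardinal.aleph0 → Order.IsSuccLimit γ →
      ∀ n : ℕ, ∃ δ : Ordinal, seq γ n = δ + 1)
    (hseqlt : ∀ γ : Ordinal, γ.card ≤ Cardinal.aleph0 → Order.IsSuccLimit γ → ∀ n : ℕ, seq γ n < γ)
    (hseqcof : ∀ γ : Ordinal, γ.card ≤ Cardinal.aleph0 → Order.IsSuccLimit γ →
      ∀ δ : Ordinal, δ < γ → ∃ n : ℕ, δ < seq γ n)
    (hsucc : ∀ γ : Ordinal, γ.card ≤ Cardinal.aleph0 → (γ = 0 ∨ ∃ δ : Ordinal, γ = δ + 1) →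
      Nonempty (V (γ + 1) ≃o WithBot (Σ _ : ℕ, V γ)))
    (hlimsucc : ∀ γ : Ordinal, γ.card ≤ Cardinal.aleph0 → Order.IsSuccLimit γ →
      Nonempty (V (γ + 1) ≃o WithBot (V γ)))
    (hlim : ∀ γ : Ordinal, γ.card ≤ Cardinal.aleph0 → Order.IsSuccLimit γ →
      Nonempty (V γ ≃o (Σ n : ℕ, V (seq γ n))))
    {Z : Type*} [NormedAddCommGroup Z] [NormedSpace ℝ Z] [CompleteSpace Z]
    (z : ℕ → Z) (zs : ℕ → StrongDual ℝ Z) (C K : ℝ)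
    (hz1 : ∀ i : ℕ, 1 ≤ ‖z i‖)
    (hzC : ∀ k : ℕ, ‖∑ i ∈ Finset.range k, z i‖ ≤ C)
    (hbasic : ∀ m n : ℕ, m ≤ n → ∀ a : ℕ → ℝ,
      ‖∑ i ∈ Finset.range m, a i • z i‖ ≤ K * ‖∑ i ∈ Finset.range n, a i • z i‖)
    (hspan : (Submodule.span ℝ (Set.range z)).topologicalClosure = ⊤)
    (hbi : ∀ i j : ℕ, zs j (z i) = if i = j then (1 : ℝ) else 0)
    (α : Ordinal) (hαc : α.card ≤ Cardinal.aleph0)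
    (e : V α → ℕ) (heinj : Function.Injective e)
    (hemono : ∀ x y : V α, x < y → e x < e y)
    (hepos : ∀ x : V α, e x ≠ 0)
    (β : Ordinal) (hβ : β ≤ α)
    (W : Set (StrongDual ℝ Z)) (hW : W = (⋃ γ : Ordinal, ⋃ _ : γ ≤ β, XsetOf e zs (derIter (Set.univ : Set (V α)) γ)))
    (I : Set (StrongDual ℝ Z))
    (hI : I = {x | x ∈ W ∧ ∃ u : V α, e u = topIdx z x ∧ ¬∃ w, w ⋖ u})
    (D : Set (StrongDual ℝ Z)) (hD : D = truncTop z zs '' (W \ I))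
    (a : ℕ → StrongDual ℝ Z → ℝ)
    (hasupp : ∀ i : ℕ, (Function.support (a i)).Finite)
    (haW : ∀ i : ℕ, Function.support (a i) ⊆ W)
    (hann : ∀ (i : ℕ) (x : StrongDual ℝ Z), 0 ≤ a i x)
    (hasum : ∀ i : ℕ, ∑ᶠ x, a i x = 1)
    (p : StrongDual ℝ Z → ℝ)
    (hp : ∀ x ∈ W, Filter.Tendsto (fun i => a i x) Filter.atTop (nhds (p x)))
    (s : StrongDual ℝ Z → ℝ)
    (hs : ∀ y ∈ D, Filter.Tendsto
      (fun i => ∑ᶠ x ∈ {x | x ∈ W \ I ∧ truncTop z zs x = y}, a i x)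
      Filter.atTop (nhds (s y)))
    (hbdd : ∃ M : ℝ, ∀ i : ℕ, ‖∑ᶠ x, a i x • x‖ ≤ M) :
    ∑' x : ↥I, p x.1 + ∑' y : ↥D, s y.1 = 1 := by
  obtain ⟨M, hM⟩ := hbdd
  subst hD
  have hfin : ∀ v : V α, (Iic v).Finite := hchainfin α hαc
  have hlin : ∀ v : V α, IsChain (· ≤ ·) (Iic v) := fun v x hx y hy _ =>
    hchainlin α hαc v x y hx hy
  have hchain : ∀ x ∈ W, ∃ T : Finset (V α), IsChain (· ≤ ·) (T : Set (V α)) ∧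
      x = chainVec e zs T := fun x hx => by
    rw [hW, mem_iUnion₂] at hx
    exact exists_chainVec_of_mem_XsetOf hfin hlin hx.choose_spec.choose_spec
  have hIW : I ⊆ W := hI ▸ fun x hx => hx.1
  have hC : 0 ≤ C := by simpa using hzC 0
  have hwt0 : ∀ x ∈ W, 0 ≤ coordSum z x := fun x hx => by
    obtain ⟨T, -, rfl⟩ := hchain x hx
    rw [coordSum_chainVec hbi heinj hepos]
    positivity
  have hcoord : ∀ x ∈ W, (Function.support fun n => x (z n)).Finite := fun x hx => by
    obtain ⟨T, -, rfl⟩ := hchain x hx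
    rw [support_chainVec_apply hbi heinj hepos]
    exact Finset.finite_toSet _
  have key : HasSum (Sum.elim (I.indicator p) ((truncTop z zs '' (W \ I)).indicator s)) 1 :=
    hasSum_one_of_tendsto_of_moment_le hann hasupp haW hasum hwt0
      (fun i => (finsum_mul_coordSum_le hzC (hasupp i) fun x hx => hcoord x (haW i hx)).trans
        (mul_le_mul_of_nonneg_right (hM i) hC))
      (exists_finset_splitMap_mem hfin hlin hbi heinj hepos hemono hchain
        (hI ▸ fun x hx => and_iff_right hx))
      (tendsto_finsum_mem_preimage_splitMap hIW haW hp hs)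
  rw [tsum_subtype I p, tsum_subtype _ s, ← key.tsum_eq,
    (key.summable.comp_injective Sum.inl_injective).tsum_sum
      (key.summable.comp_injective Sum.inr_injective)]
  rfl

end Paper
end
end
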